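/- arXiv:1711.08825 — 4 statements merged into one kernel-verified Lean document; each statement's English description precedes it below -/
import Mathlib

section
/- Let K, L be convex bodies in ℝⁿ containing the origin. Then the map T : K → L defined by T(x) = ‖x‖_K · ν_L⁻¹(ν_K(x/‖x‖_K)) for x ≠ 0 (and T(0) = 0), where ‖·‖_K is the Minkowski gauge of K and ν_K, ν_L are the Gauss maps, satisfies (Id + tT)(K) = K + tL for all t ≥ 0. -/
/-!
A point `z ≠ 0` of `K + t • L` is `μ • z'` with `μ = ‖z‖_{K + t • L} ∈ (0, 1]` and `z'` on the
boundary of `K + t • L`. A unit outer normal `u` at `z' = a + t • b` is maximised over `K` at `a` and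
over `L` at `b`, so `u = ν_K a` and `b = ν_L⁻¹ u`, i.e. `z' = a + t • T a` with `a ∈ ∂K`. Since `T`
is positively homogeneous, `z = μ • a + t • T (μ • a)` with `μ • a ∈ K`. Conversely `T x` is
`‖x‖_K ≤ 1` times a point of `L`, hence lies in `L`.
-/

open Set Filter Topology
open scoped RealInnerProductSpace Pointwise

section Gauge

variable {E : Type*} [AddCommGroup E] [Module ℝ E]

/-- The paper's `T`; it vanishes at `0` because `gauge K 0 = 0`. -/
noncomputable def gaugeMap (K : Set E) (νK νLinv : E → E) (x : E) : E :=
  gauge K x • νLinv (νK ((gauge K x)⁻¹ • x))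

variable {K L : Set E} {νK νLinv : E → E}

lemma gaugeMap_smul {c : ℝ} (hc : 0 ≤ c) (x : E) :
    gaugeMap K νK νLinv (c • x) = c • gaugeMap K νK νLinv x := by
  rcases hc.eq_or_lt with rfl | hc
  · simp [gaugeMap]
  · rw [gaugeMap, gaugeMap, gauge_smul_of_nonneg hc.le, smul_eq_mul, mul_inv_rev, mul_smul,
      mul_smul, inv_smul_smul₀ hc.ne']

lemma gaugeMap_of_gauge_eq_one {a : E} (ha : gauge K a = 1) :
    gaugeMap K νK νLinv a = νLinv (νK a) := by
  simp [gaugeMap, ha]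

variable [TopologicalSpace E] [IsTopologicalAddGroup E] [ContinuousSMul ℝ E]

lemma inv_gauge_smul_mem_frontier (hK : Convex ℝ K) (hK₀ : K ∈ 𝓝 0) {x : E}
    (hx : gauge K x ≠ 0) : (gauge K x)⁻¹ • x ∈ frontier K := by
  rw [← gauge_eq_one_iff_mem_frontier hK hK₀, gauge_smul_of_nonneg (inv_nonneg.2 (gauge_nonneg x)),
    smul_eq_mul, inv_mul_cancel₀ hx]

lemma gaugeMap_mem (hK : Convex ℝ K) (hK₀ : K ∈ 𝓝 0) (hL : Convex ℝ L) (hL₀ : (0 : E) ∈ L)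
    (hνL : MapsTo (νLinv ∘ νK) (frontier K) L) {x : E} (hx : x ∈ K) :
    gaugeMap K νK νLinv x ∈ L := by
  rcases eq_or_ne (gauge K x) 0 with hx₀ | hx₀
  · simpa [gaugeMap, hx₀] using hL₀
  · exact hL.smul_mem_of_zero_mem hL₀ (hνL (inv_gauge_smul_mem_frontier hK hK₀ hx₀))
      ⟨gauge_nonneg x, gauge_le_one_of_mem hx⟩

end Gauge

section InnerProductSpace

variable {E : Type*} [NormedAddCommGroup E] [InnerProductSpace ℝ E]

lemma exists_norm_eq_one_forall_inner_le_of_notMem_interior [CompleteSpace E] {M : Set E}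
    (hM : Convex ℝ M) (hMint : (interior M).Nonempty) {z : E} (hz : z ∉ interior M) :
    ∃ u : E, ‖u‖ = 1 ∧ ∀ w ∈ M, ⟪w, u⟫ ≤ ⟪z, u⟫ := by
  obtain ⟨f, hf₀, hf⟩ := geometric_hahn_banach_of_nonempty_interior_point hM hz hMint
  set v := (InnerProductSpace.toDual ℝ E).symm f
  have hv : ∀ w, ⟪w, v⟫ = f w := fun w => by
    rw [real_inner_comm, InnerProductSpace.toDual_symm_apply]
  have hv₀ : v ≠ 0 := by simpa [v] using hf₀
  refine ⟨‖v‖⁻¹ • v, norm_smul_inv_norm hv₀, fun w hw => ?_⟩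
  simp only [real_inner_smul_right, hv]
  exact mul_le_mul_of_nonneg_left (hf w hw) (by positivity)

lemma mem_frontier_of_forall_inner_le {s : Set E} {a u : E} (ha : a ∈ s) (hu : u ≠ 0)
    (hmax : ∀ w ∈ s, ⟪w, u⟫ ≤ ⟪a, u⟫) : a ∈ frontier s := by
  refine ⟨subset_closure ha, fun ha' => hu ?_⟩
  have hloc : IsLocalMax (innerSL ℝ u) a :=
    eventually_of_mem (mem_interior_iff_mem_nhds.1 ha') fun w hw => by
      simpa only [innerSL_apply_apply, real_inner_comm u] using hmax w hw
  simpa using congrArg norm (hloc.hasFDerivAt_eq_zero (innerSL ℝ u).hasFDerivAt)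

lemma forall_inner_le_of_forall_inner_le_add_smul {K L : Set E} {t : ℝ} (ht : 0 < t)
    {a b u : E} (ha : a ∈ K) (hb : b ∈ L) (hmax : ∀ w ∈ K + t • L, ⟪w, u⟫ ≤ ⟪a + t • b, u⟫) :
    (∀ a' ∈ K, ⟪a', u⟫ ≤ ⟪a, u⟫) ∧ ∀ b' ∈ L, ⟪b', u⟫ ≤ ⟪b, u⟫ := by
  refine ⟨fun a' ha' => ?_, fun b' hb' => ?_⟩
  · have h := hmax _ (add_mem_add ha' (smul_mem_smul_set hb))
    rw [inner_add_left, inner_add_left] at h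
    linarith
  · have h := hmax _ (add_mem_add ha (smul_mem_smul_set hb'))
    rw [inner_add_left, inner_add_left, real_inner_smul_left, real_inner_smul_left] at h
    exact le_of_mul_le_mul_left (by linarith) ht

variable [CompleteSpace E] {K L : Set E} {νK νLinv : E → E} {t : ℝ}

lemma exists_mem_frontier_add_smul_gaugeMap_eq (hK : Convex ℝ K) (hK₀ : K ∈ 𝓝 0)
    (hL : Convex ℝ L) (hL₀ : (0 : E) ∈ L) (hKL : IsClosed (K + t • L))
    (hνK : ∀ a ∈ frontier K, ∀ u : E, ‖u‖ = 1 → (∀ w ∈ K, ⟪w, u⟫ ≤ ⟪a, u⟫) → u = νK a)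
    (hνL : ∀ u : E, ‖u‖ = 1 → ∀ b ∈ L, (∀ w ∈ L, ⟪w, u⟫ ≤ ⟪b, u⟫) → b = νLinv u)
    (ht : 0 < t) {z : E} (hz : z ∈ frontier (K + t • L)) :
    ∃ a ∈ frontier K, a + t • gaugeMap K νK νLinv a = z := by
  have hKL₀ : (0 : E) ∈ interior (K + t • L) :=
    interior_mono (subset_add_left K (zero_mem_smul_set hL₀)) (mem_interior_iff_mem_nhds.2 hK₀)
  obtain ⟨u, hu, hmax⟩ := exists_norm_eq_one_forall_inner_le_of_notMem_interior
    (hK.add (hL.smul t)) ⟨0, hKL₀⟩ hz.2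
  obtain ⟨a, ha, _, ⟨b, hb, rfl⟩, rfl⟩ := hKL.frontier_subset hz
  obtain ⟨hKa, hLb⟩ := forall_inner_le_of_forall_inner_le_add_smul ht ha hb hmax
  have haK : a ∈ frontier K :=
    mem_frontier_of_forall_inner_le ha (ne_zero_of_norm_ne_zero (hu ▸ one_ne_zero)) hKa
  refine ⟨a, haK, ?_⟩
  rw [gaugeMap_of_gauge_eq_one ((gauge_eq_one_iff_mem_frontier hK hK₀).2 haK),
    ← hνK a haK u hu hKa, ← hνL u hu b hb hLb]

lemma exists_add_smul_gaugeMap_eq (hK : Convex ℝ K) (hKc : IsCompact K) (hK₀ : K ∈ 𝓝 0)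
    (hL : Convex ℝ L) (hLc : IsCompact L) (hL₀ : (0 : E) ∈ L)
    (hνK : ∀ a ∈ frontier K, ∀ u : E, ‖u‖ = 1 → (∀ w ∈ K, ⟪w, u⟫ ≤ ⟪a, u⟫) → u = νK a)
    (hνL : ∀ u : E, ‖u‖ = 1 → ∀ b ∈ L, (∀ w ∈ L, ⟪w, u⟫ ≤ ⟪b, u⟫) → b = νLinv u)
    (ht : 0 < t) {z : E} (hz : z ∈ K + t • L) :
    ∃ x ∈ K, x + t • gaugeMap K νK νLinv x = z := by
  rcases eq_or_ne z 0 with rfl | hz₀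
  · exact ⟨0, mem_of_mem_nhds hK₀, by simp [gaugeMap]⟩
  have hKL : IsCompact (K + t • L) := hKc.add (hLc.smul t)
  have hKL₀ : K + t • L ∈ 𝓝 0 := mem_of_superset hK₀ (subset_add_left K (zero_mem_smul_set hL₀))
  set μ := gauge (K + t • L) z
  have hμ : 0 < μ := (gauge_pos (absorbent_nhds_zero hKL₀) (hKL.isVonNBounded (𝕜 := ℝ))).2 hz₀
  obtain ⟨a, ha, haz⟩ := exists_mem_frontier_add_smul_gaugeMap_eq hK hK₀ hL hL₀ hKL.isClosed
    hνK hνL ht (inv_gauge_smul_mem_frontier (hK.add (hL.smul t)) hKL₀ hμ.ne')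
  refine ⟨μ • a, hK.smul_mem_of_zero_mem (mem_of_mem_nhds hK₀) (hKc.isClosed.frontier_subset ha)
    ⟨hμ.le, gauge_le_one_of_mem hz⟩, ?_⟩
  rw [gaugeMap_smul hμ.le, smul_comm t μ, ← smul_add, haz, smul_inv_smul₀ hμ.ne']

theorem image_add_smul_gaugeMap (hK : Convex ℝ K) (hKc : IsCompact K) (hK₀ : K ∈ 𝓝 0)
    (hL : Convex ℝ L) (hLc : IsCompact L) (hL₀ : (0 : E) ∈ L)
    (hνKL : MapsTo (νLinv ∘ νK) (frontier K) L)
    (hνK : ∀ a ∈ frontier K, ∀ u : E, ‖u‖ = 1 → (∀ w ∈ K, ⟪w, u⟫ ≤ ⟪a, u⟫) → u = νK a)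
    (hνL : ∀ u : E, ‖u‖ = 1 → ∀ b ∈ L, (∀ w ∈ L, ⟪w, u⟫ ≤ ⟪b, u⟫) → b = νLinv u)
    (ht : 0 ≤ t) :
    (fun x => x + t • gaugeMap K νK νLinv x) '' K = K + t • L := by
  rcases ht.eq_or_lt with rfl | ht
  · simp [zero_smul_set ⟨0, hL₀⟩]
  refine Subset.antisymm ?_ fun z hz =>
    exists_add_smul_gaugeMap_eq hK hKc hK₀ hL hLc hL₀ hνK hνL ht hz
  rintro _ ⟨x, hx, rfl⟩
  exact add_mem_add hx (smul_mem_smul_set (gaugeMap_mem hK hK₀ hL hL₀ hνKL hx))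

end InnerProductSpace

/-- Let `K, L` be compact convex bodies in `ℝⁿ` with `0` in their
interiors, with strictly convex smooth boundaries encoded by the Gauss map `ν_K` of `K`
(unique outer unit normal at every boundary point) and the inverse Gauss map `ν_L⁻¹` of
`L` (unique support point for every unit direction). Then the map
`T(x) = ‖x‖_K · ν_L⁻¹(ν_K(x/‖x‖_K))` (with `T(0) = 0`, `‖·‖_K` being the Minkowski
gauge of `K`) satisfies `(Id + tT)(K) = K + tL` for all `t ≥ 0`. -/
theorem minkowski_sum_via_gauge_map {n : ℕ}
    (K L : Set (EuclideanSpace ℝ (Fin n)))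
    (hKconv : Convex ℝ K) (hKcomp : IsCompact K) (hK0 : 0 ∈ interior K)
    (hLconv : Convex ℝ L) (hLcomp : IsCompact L) (hL0 : 0 ∈ interior L)
    (νK νLinv : EuclideanSpace ℝ (Fin n) → EuclideanSpace ℝ (Fin n))
    (hνK : ∀ x ∈ frontier K, ‖νK x‖ = 1 ∧ ∀ z ∈ K, ⟪z, νK x⟫ ≤ ⟪x, νK x⟫)
    (hνKuniq : ∀ x ∈ frontier K, ∀ u : EuclideanSpace ℝ (Fin n),
      ‖u‖ = 1 → (∀ z ∈ K, ⟪z, u⟫ ≤ ⟪x, u⟫) → u = νK x)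
    (hνLinv : ∀ u : EuclideanSpace ℝ (Fin n), ‖u‖ = 1 →
      νLinv u ∈ frontier L ∧ ∀ z ∈ L, ⟪z, u⟫ ≤ ⟪νLinv u, u⟫)
    (hνLuniq : ∀ u : EuclideanSpace ℝ (Fin n), ‖u‖ = 1 →
      ∀ z ∈ L, ⟪z, u⟫ = ⟪νLinv u, u⟫ → z = νLinv u)
    (T : EuclideanSpace ℝ (Fin n) → EuclideanSpace ℝ (Fin n))
    (hT : ∀ x : EuclideanSpace ℝ (Fin n), x ≠ 0 →
      T x = gauge K x • νLinv (νK ((gauge K x)⁻¹ • x)))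
    (hT0 : T 0 = 0)
    (t : ℝ) (ht : 0 ≤ t) :
    (fun x => x + t • T x) '' K = K + t • L := by
  have hT_eq : T = gaugeMap K νK νLinv := funext fun x => by
    rcases eq_or_ne x 0 with rfl | hx
    · simp [hT0, gaugeMap]
    · exact hT x hx
  have hνLinv_mem : ∀ u, ‖u‖ = 1 → νLinv u ∈ L := fun u hu =>
    hLcomp.isClosed.frontier_subset (hνLinv u hu).1
  subst hT_eq
  refine image_add_smul_gaugeMap hKconv hKcomp (mem_interior_iff_mem_nhds.1 hK0) hLconv hLcomp
    (interior_subset hL0) (fun y hy => hνLinv_mem _ (hνK y hy).1) hνKuniq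
    (fun u hu b hb hmax => ?_) ht
  exact hνLuniq u hu b hb ((hνLinv u hu).2 b hb |>.antisymm (hmax _ (hνLinv_mem u hu)))
end

section
/- Let V : (0, ∞) → (0, ∞) be a twice differentiable increasing function and let 1/N ∈ (−∞, 1/n] with N ∉ (0, n). If t ↦ N·V(t)^{1/N} is concave (i.e. (V^{1/N})'' ≤ 0, equivalently V·V'' ≤ (1 − 1/N)(V')²), then the function v ↦ (I(v))^{N/(N−1)}/v is non-increasing on the range of V, where I := V' ∘ V⁻¹. -/
/-!
Where `V' > 0`, the derivative of `t ↦ V'(t)^p / V(t)` is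
`V'^(p-1) (p V V'' - V'^2) / V^2`, and for `p = N/(N-1) ≥ 0` the concavity hypothesis gives
`p V V'' ≤ p (1 - 1/N) V'^2 ≤ V'^2`; composing with the increasing inverse of `V` turns this
into the claim. That `V'` never vanishes comes from the same hypothesis: it makes
`V^(1/N - 1) V'`, the derivative of `N V^(1/N)`, antitone, so a zero of `V'` would persist to
the right of it and contradict the strict monotonicity of `V`.
-/

open Set

theorem StrictMonoOn.monotoneOn_invFunOn {α β : Type*} [LinearOrder α] [Preorder β] [Nonempty α]
    {f : α → β} {s : Set α} (hf : StrictMonoOn f s) :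
    MonotoneOn (Function.invFunOn f s) (f '' s) := by
  rintro _ ⟨a, ha, rfl⟩ _ ⟨b, hb, rfl⟩ hab
  rwa [← hf.le_iff_le (Function.invFunOn_apply_mem ha) (Function.invFunOn_apply_mem hb),
    Function.invFunOn_apply_eq (f := f) ha, Function.invFunOn_apply_eq (f := f) hb]

theorem AntitoneOn.comp_invFunOn {α β γ : Type*} [LinearOrder α] [Preorder β] [Preorder γ]
    [Nonempty α] {f : α → β} {g : α → γ} {s : Set α} (hg : AntitoneOn g s)
    (hf : StrictMonoOn f s) : AntitoneOn (g ∘ Function.invFunOn f s) (f '' s) :=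
  hg.comp_MonotoneOn hf.monotoneOn_invFunOn (surjOn_image f s).mapsTo_invFunOn

theorem MonotoneOn.deriv_nonneg_of_isOpen {f : ℝ → ℝ} {s : Set ℝ} {x : ℝ}
    (hf : MonotoneOn f s) (hs : IsOpen s) (hx : x ∈ s) : 0 ≤ deriv f x := by
  rw [← derivWithin_of_isOpen hs hx]
  exact hf.derivWithin_nonneg

theorem antitoneOn_Ioi_of_hasDerivAt_nonpos {f f' : ℝ → ℝ} {b : ℝ}
    (hf : ∀ x ∈ Ioi b, HasDerivAt f (f' x) x) (hf' : ∀ x ∈ Ioi b, f' x ≤ 0) :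
    AntitoneOn f (Ioi b) := by
  refine antitoneOn_of_hasDerivWithinAt_nonpos (f' := f') (convex_Ioi b)
    (fun x hx => (hf x hx).continuousAt.continuousWithinAt) ?_ ?_ <;> rw [interior_Ioi]
  · exact fun x hx => (hf x hx).hasDerivWithinAt
  · exact hf'

section ConcaveVolume

variable {V : ℝ → ℝ} {b : ℝ}

theorem deriv_pos_of_antitoneOn_mul_deriv {w : ℝ → ℝ} {t : ℝ}
    (hV : StrictMonoOn V (Ioi b)) (hV1 : ∀ x ∈ Ioi b, DifferentiableAt ℝ V x)
    (hw : ∀ x ∈ Ioi b, 0 < w x) (hanti : AntitoneOn (fun x => w x * deriv V x) (Ioi b))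
    (ht : t ∈ Ioi b) : 0 < deriv V t := by
  have hderiv_nonneg : ∀ x ∈ Ioi b, 0 ≤ deriv V x := fun x hx =>
    hV.monotoneOn.deriv_nonneg_of_isOpen isOpen_Ioi hx
  refine (hderiv_nonneg t ht).lt_of_ne' fun hzero => ?_
  have hIcc : Icc t (t + 1) ⊆ Ioi b := fun x hx => lt_of_lt_of_le ht hx.1
  have hvanish : ∀ x ∈ Ioo t (t + 1), deriv V x = 0 := fun x hx => by
    have hxb : x ∈ Ioi b := hIcc (Ioo_subset_Icc_self hx)
    have hwx : w x * deriv V x ≤ 0 := by simpa [hzero] using hanti ht hxb hx.1.le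
    exact le_antisymm (nonpos_of_mul_nonpos_right hwx (hw x hxb)) (hderiv_nonneg x hxb)
  obtain ⟨c, hc, hslope⟩ := exists_deriv_eq_slope V (lt_add_one t)
    (fun x hx => (hV1 x (hIcc hx)).continuousAt.continuousWithinAt)
    (fun x hx => (hV1 x (hIcc (Ioo_subset_Icc_self hx))).differentiableWithinAt)
  have hincr : V t < V (t + 1) := hV ht (hIcc (right_mem_Icc.2 (by linarith))) (lt_add_one t)
  rw [hvanish c hc, add_sub_cancel_left, div_one] at hslope
  linarith

variable (hVpos : ∀ x ∈ Ioi b, 0 < V x) (hV1 : ∀ x ∈ Ioi b, DifferentiableAt ℝ V x)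
  (hV2 : ∀ x ∈ Ioi b, DifferentiableAt ℝ (deriv V) x)
include hVpos hV1 hV2

theorem antitoneOn_rpow_sub_one_mul_deriv {a : ℝ}
    (hconc : ∀ x ∈ Ioi b, V x * deriv (deriv V) x ≤ (1 - a) * deriv V x ^ 2) :
    AntitoneOn (fun x => V x ^ (a - 1) * deriv V x) (Ioi b) := by
  refine antitoneOn_Ioi_of_hasDerivAt_nonpos (fun x hx =>
    ((hV1 x hx).hasDerivAt.rpow_const (Or.inl (hVpos x hx).ne')).mul (hV2 x hx).hasDerivAt)
    fun x hx => ?_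
  have hsplit : V x ^ (a - 1) = V x ^ (a - 2) * V x := by
    rw [← Real.rpow_add_one (hVpos x hx).ne']; ring_nf
  calc deriv V x * (a - 1) * V x ^ (a - 1 - 1) * deriv V x + V x ^ (a - 1) * deriv (deriv V) x
      = V x ^ (a - 2) * ((a - 1) * deriv V x ^ 2 + V x * deriv (deriv V) x) := by
        rw [hsplit]; ring_nf
    _ ≤ 0 := mul_nonpos_of_nonneg_of_nonpos (Real.rpow_nonneg (hVpos x hx).le _)
        (by linarith [hconc x hx])

theorem antitoneOn_deriv_rpow_div {p : ℝ} (hV'pos : ∀ x ∈ Ioi b, 0 < deriv V x)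
    (hp : ∀ x ∈ Ioi b, p * (V x * deriv (deriv V) x) ≤ deriv V x ^ 2) :
    AntitoneOn (fun x => deriv V x ^ p / V x) (Ioi b) := by
  refine antitoneOn_Ioi_of_hasDerivAt_nonpos (fun x hx =>
    ((hV2 x hx).hasDerivAt.rpow_const (Or.inl (hV'pos x hx).ne')).div (hV1 x hx).hasDerivAt
      (hVpos x hx).ne') fun x hx => ?_
  have hsplit : deriv V x ^ p = deriv V x ^ (p - 1) * deriv V x := by
    rw [← Real.rpow_add_one (hV'pos x hx).ne']; ring_nf
  refine div_nonpos_of_nonpos_of_nonneg ?_ (sq_nonneg _)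
  calc deriv (deriv V) x * p * deriv V x ^ (p - 1) * V x - deriv V x ^ p * deriv V x
      = deriv V x ^ (p - 1) * (p * (V x * deriv (deriv V) x) - deriv V x ^ 2) := by
        rw [hsplit]; ring
    _ ≤ 0 := mul_nonpos_of_nonneg_of_nonpos (Real.rpow_nonneg (hV'pos x hx).le _)
        (by linarith [hp x hx])

end ConcaveVolume

theorem div_sub_one_nonneg {N : ℝ} (hN : 1 ≤ N ∨ N ≤ 0) : 0 ≤ N / (N - 1) := by
  rcases hN with hN | hN
  · exact div_nonneg (by linarith) (by linarith)
  · exact div_nonneg_of_nonpos hN (by linarith)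

-- `N = 0` and `N = 1` give `0 ≤ 1` through `1 / 0 = 0`; otherwise the product is `1`.
theorem div_sub_one_mul_one_sub_inv_le_one (N : ℝ) : N / (N - 1) * (1 - 1 / N) ≤ 1 := by
  by_cases hN0 : N = 0
  · simp [hN0]
  by_cases hN1 : N - 1 = 0
  · simp [hN1]
  rw [one_sub_div hN0, div_mul_div_comm, mul_comm, div_self (mul_ne_zero hN1 hN0)]

theorem isoperimetric_profile_monotone_general (n N : ℝ) (hn : 1 ≤ n)
    (hN : n ≤ N ∨ N ≤ 0)
    (V : ℝ → ℝ) (hVpos : ∀ t ∈ Ioi (0 : ℝ), 0 < V t)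
    (hVmono : StrictMonoOn V (Ioi 0))
    (hV1 : ∀ t ∈ Ioi (0 : ℝ), DifferentiableAt ℝ V t)
    (hV2 : ∀ t ∈ Ioi (0 : ℝ), DifferentiableAt ℝ (deriv V) t)
    (hconc : ∀ t ∈ Ioi (0 : ℝ),
      V t * deriv (deriv V) t ≤ (1 - 1 / N) * (deriv V t) ^ 2) :
    AntitoneOn
      (fun v => (deriv V (Function.invFunOn V (Ioi 0) v)) ^ (N / (N - 1)) / v)
      (V '' Ioi 0) := by
  have hp : 0 ≤ N / (N - 1) := div_sub_one_nonneg (hN.imp hn.trans id)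
  have hV'pos : ∀ t ∈ Ioi (0 : ℝ), 0 < deriv V t := fun t ht =>
    deriv_pos_of_antitoneOn_mul_deriv hVmono hV1 (fun x hx => Real.rpow_pos_of_pos (hVpos x hx) _)
      (antitoneOn_rpow_sub_one_mul_deriv hVpos hV1 hV2 hconc) ht
  have hpconc : ∀ t ∈ Ioi (0 : ℝ), N / (N - 1) * (V t * deriv (deriv V) t) ≤ deriv V t ^ 2 :=
    fun t ht => calc
      N / (N - 1) * (V t * deriv (deriv V) t)
          ≤ N / (N - 1) * ((1 - 1 / N) * deriv V t ^ 2) := mul_le_mul_of_nonneg_left (hconc t ht) hp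
      _ = N / (N - 1) * (1 - 1 / N) * deriv V t ^ 2 := by ring
      _ ≤ deriv V t ^ 2 := mul_le_of_le_one_left (sq_nonneg _)
          (div_sub_one_mul_one_sub_inv_le_one N)
  refine ((antitoneOn_deriv_rpow_div hVpos hV1 hV2 hV'pos hpconc).comp_invFunOn hVmono).congr ?_
  rintro _ ⟨t, ht, rfl⟩
  simp only [Function.comp_apply, Function.invFunOn_apply_eq ht]

/-- Let `V : (0,∞) → (0,∞)` be a twice differentiable increasing
function, and let `1/N ∈ (−∞, 1/n]` with `N ∉ (0, n)` (and `N ≠ 1`). If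
`t ↦ N·V(t)^{1/N}` is concave, equivalently `V·V'' ≤ (1 − 1/N)(V')²`, then
`v ↦ I(v)^{N/(N−1)} / v` is non-increasing on the range of `V`, where
`I := V' ∘ V⁻¹`. -/
theorem isoperimetric_profile_monotone (n N : ℝ) (hn : 1 ≤ n)
    (hN : n ≤ N ∨ N ≤ 0) (hN1 : N ≠ 1)
    (V : ℝ → ℝ) (hVpos : ∀ t ∈ Ioi (0 : ℝ), 0 < V t)
    (hVmono : StrictMonoOn V (Ioi 0))
    (hV1 : ∀ t ∈ Ioi (0 : ℝ), DifferentiableAt ℝ V t)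
    (hV2 : ∀ t ∈ Ioi (0 : ℝ), DifferentiableAt ℝ (deriv V) t)
    (hconc : ∀ t ∈ Ioi (0 : ℝ),
      V t * deriv (deriv V) t ≤ (1 - 1 / N) * (deriv V t) ^ 2) :
    AntitoneOn
      (fun v => (deriv V (Function.invFunOn V (Ioi 0) v)) ^ (N / (N - 1)) / v)
      (V '' Ioi 0) :=
  isoperimetric_profile_monotone_general n N hn hN V hVpos hVmono hV1 hV2 hconc
end

section
/- Under the hypotheses: (M,g,μ) satisfies CD(ρ,N), 0 ≤ II_{∂M} ≤ H_μ g₀ on ∂M, and R^M_g(·,ν,·,ν) ≤ κ g₀ as 2-tensors on T∂M, the boundary weighted manifold (∂M, g₀, μ_{∂M}) satisfies CD(ρ−κ, N−1). -/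
/-!
The boundary tensor `Ric^{∂M} + Hess^{∂M} V` is the restricted `Ric + Hess V` of `M`, minus
`R(·,ν,·,ν)`, plus `(H_μ g₀ − II) ∘ II`, while the codimension `N − n` is unchanged. The last
term is nonnegative: for a positive operator `T ≤ c`, Cauchy–Schwarz for the form `⟪T ·, ·⟫`
at `x` and `T x` gives `‖T x‖⁴ ≤ ⟪T x, x⟫ ⟪T (T x), T x⟫ ≤ c ⟪T x, x⟫ ‖T x‖²`.
-/

open scoped RealInnerProductSpace

namespace LinearMap

variable {E : Type*} [NormedAddCommGroup E] [InnerProductSpace ℝ E] {T : E →ₗ[ℝ] E}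

theorem IsPositive.inner_apply_sq_le (hT : T.IsPositive) (x y : E) :
    ⟪T x, y⟫ ^ 2 ≤ ⟪T x, x⟫ * ⟪T y, y⟫ := by
  have hsymm : ⟪T y, x⟫ = ⟪T x, y⟫ := by rw [hT.isSymmetric, real_inner_comm]
  simpa [sq, hsymm] using
    LinearMap.BilinForm.apply_mul_apply_le_of_forall_zero_le ((innerₗ E).comp T)
      hT.inner_nonneg_left x y

theorem IsPositive.inner_comp_self_nonneg {c : ℝ} (hT : T.IsPositive)
    (hle : ∀ x, ⟪T x, x⟫ ≤ c * ‖x‖ ^ 2) (x : E) :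
    0 ≤ ⟪((c • LinearMap.id - T) ∘ₗ T) x, x⟫ := by
  have hTT : ⟪T (T x), x⟫ = ‖T x‖ ^ 2 := by
    rw [hT.isSymmetric, real_inner_self_eq_norm_sq]
  have hexp : ⟪((c • LinearMap.id - T) ∘ₗ T) x, x⟫ = c * ⟪T x, x⟫ - ‖T x‖ ^ 2 := by
    simp [inner_sub_left, real_inner_smul_left, hTT]
  have hcs : (‖T x‖ ^ 2) ^ 2 ≤ ⟪T x, x⟫ * (c * ‖T x‖ ^ 2) := by
    calc (‖T x‖ ^ 2) ^ 2 = ⟪T x, T x⟫ ^ 2 := by rw [real_inner_self_eq_norm_sq]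
      _ ≤ ⟪T x, x⟫ * ⟪T (T x), T x⟫ := hT.inner_apply_sq_le x (T x)
      _ ≤ ⟪T x, x⟫ * (c * ‖T x‖ ^ 2) := by gcongr; exacts [hT.inner_nonneg_left x, hle (T x)]
  rw [hexp, sub_nonneg]
  rcases (sq_nonneg ‖T x‖).eq_or_lt with h0 | hpos
  · have hTx : T x = 0 := by simpa using h0.symm
    simp [hTx]
  · refine le_of_mul_le_mul_right ?_ hpos
    linarith [hcs]

end LinearMap

theorem boundary_curvature_dimension_general
    {n : ℕ} {E : Type*} [NormedAddCommGroup E] [InnerProductSpace ℝ E]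
    (N ρ κ Hg Vν : ℝ)
    (RicM_g HessVM Rν II RicB_g HessVB : E →ₗ[ℝ] E) (dV : E →ₗ[ℝ] ℝ)
    (hIIsymm : LinearMap.IsSymmetric II)
    (hGauss : RicB_g = RicM_g - Rν + (Hg • LinearMap.id - II) ∘ₗ II)
    (hHess : HessVB = HessVM - Vν • II)
    (hCD : ∀ x : E, ρ * ‖x‖ ^ 2 ≤ ⟪(RicM_g + HessVM) x, x⟫ - dV x ^ 2 / (N - n))
    (hIIpsd : ∀ x : E, 0 ≤ ⟪II x, x⟫)
    (hIIub : ∀ x : E, ⟪II x, x⟫ ≤ (Hg - Vν) * ‖x‖ ^ 2)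
    (hRν : ∀ x : E, ⟪Rν x, x⟫ ≤ κ * ‖x‖ ^ 2) :
    ∀ x : E, (ρ - κ) * ‖x‖ ^ 2 ≤
      ⟪(RicB_g + HessVB) x, x⟫ - dV x ^ 2 / ((N - 1) - ((n : ℝ) - 1)) := by
  have hII : II.IsPositive := (LinearMap.isPositive_iff II).mpr ⟨hIIsymm, hIIpsd⟩
  have hboundary : RicB_g + HessVB =
      RicM_g + HessVM - Rν + ((Hg - Vν) • LinearMap.id - II) ∘ₗ II := by
    rw [hGauss, hHess]
    ext y
    simp only [LinearMap.add_apply, LinearMap.sub_apply, LinearMap.comp_apply,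
      LinearMap.smul_apply, LinearMap.id_apply, sub_smul]
    abel
  intro x
  have hcodim : (N - 1) - ((n : ℝ) - 1) = N - n := by ring
  have hII_term := hII.inner_comp_self_nonneg hIIub x
  rw [hcodim, hboundary, LinearMap.add_apply, LinearMap.sub_apply, inner_add_left, inner_sub_left]
  linarith [hCD x, hRν x]

/-- (Corollary 5.2: curvature-dimension of the boundary.)
Pointwise formulation on the tangent space `E = T_x(∂M)` (of dimension `n − 1`) of a
boundary point, identifying `2`-tensors with endomorphisms of `E` via the induced
metric `g₀` (so `g₀ = id`).  With `RicM_g`, `HessVM` the (restricted) Ricci tensor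
and Hessian of `V` on `M`, `dV` the (restricted) differential of `V`,
`Rν = R^M_g(·,ν,·,ν)|_{T∂M}`, `II` the second fundamental form, `Hg` the mean
curvature, `Vν = ⟨∇V, ν⟩`, `Hμ = Hg − Vν`, and the boundary tensors `RicB_g`,
`HessVB` determined by the Gauss equation and the boundary Hessian identity:
if `(M, g, μ)` satisfies `CD(ρ, N)` (restricted to tangential directions),
`0 ≤ II ≤ H_μ·g₀`, and `R^M_g(·,ν,·,ν) ≤ κ·g₀` on `T∂M`, then
`(∂M, g₀, μ_{∂M})` satisfies `CD(ρ − κ, N − 1)`: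
`Ric^{∂M} + Hess^{∂M}V − dV⊗dV/((N−1)−(n−1)) ≥ (ρ − κ)·g₀`. -/
theorem boundary_curvature_dimension
    {n : ℕ} {E : Type*} [NormedAddCommGroup E] [InnerProductSpace ℝ E]
    [FiniteDimensional ℝ E] (hdim : Module.finrank ℝ E + 1 = n)
    (N ρ κ Hg Vν : ℝ) (hNn : N ≠ (n : ℝ))
    (RicM_g HessVM Rν II RicB_g HessVB : E →ₗ[ℝ] E) (dV : E →ₗ[ℝ] ℝ)
    (hIIsymm : LinearMap.IsSymmetric II)
    (hGauss : RicB_g = RicM_g - Rν + (Hg • LinearMap.id - II) ∘ₗ II)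
    (hHess : HessVB = HessVM - Vν • II)
    (hCD : ∀ x : E, ρ * ‖x‖ ^ 2 ≤ ⟪(RicM_g + HessVM) x, x⟫ - dV x ^ 2 / (N - n))
    (hIIpsd : ∀ x : E, 0 ≤ ⟪II x, x⟫)
    (hIIub : ∀ x : E, ⟪II x, x⟫ ≤ (Hg - Vν) * ‖x‖ ^ 2)
    (hRν : ∀ x : E, ⟪Rν x, x⟫ ≤ κ * ‖x‖ ^ 2) :
    ∀ x : E, (ρ - κ) * ‖x‖ ^ 2 ≤
      ⟪(RicB_g + HessVB) x, x⟫ - dV x ^ 2 / ((N - 1) - ((n : ℝ) - 1)) :=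
  boundary_curvature_dimension_general N ρ κ Hg Vν RicM_g HessVM Rν II RicB_g HessVB dV hIIsymm
    hGauss hHess hCD hIIpsd hIIub hRν
end

section
/- Let (M,g,μ) satisfy CD(ρ,N), suppose R^M_g(·,ν,·,ν) ≤ κ g₀ on T∂M, II_{∂M} ≥ σ g₀ with σ ≥ 0, ⟨∇V, ν⟩ ≤ 0 on ∂M, and H_g ≥ ξ on ∂M. Then (∂M, g₀, μ_{∂M}) satisfies CD(ρ − κ + σ(ξ − σ), N−1). In particular, since always H_g ≥ (n−1)σ, it satisfies CD(ρ − κ + (n−2)σ², N−1). -/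
/-!
For the positive operator `A = II − σ` one has `‖A x‖² ≤ tr A · ⟪A x, x⟫` (diagonalise `A`), and
`tr A = H_g − (n − 1)σ ≤ H_g − 2σ`; rearranged, this is the pointwise estimate
`⟪(H_g − II) II x, x⟫ ≥ σ (H_g − σ) ‖x‖²`. Inserted into the Gauss equation, together with
`−⟨∇V, ν⟩ ⟪II x, x⟫ ≥ 0` and `R(·,ν,·,ν) ≤ κ`, it gives `CD(ρ − κ + σ (H_g − σ), N − 1)`; the two
constants of the statement follow from `H_g ≥ ξ` and `H_g ≥ (n − 1)σ`.
-/

open scoped RealInnerProductSpace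

namespace LinearMap

variable {E : Type*} [NormedAddCommGroup E] [InnerProductSpace ℝ E]

theorem IsSymmetric.isPositive_sub_smul_id {T : E →ₗ[ℝ] E} (hT : T.IsSymmetric) {c : ℝ}
    (hc : ∀ x, c * ‖x‖ ^ 2 ≤ ⟪T x, x⟫) : (T - c • LinearMap.id).IsPositive := by
  refine ⟨hT.sub (IsSymmetric.id.smul (conj_trivial c)), fun x ↦ ?_⟩
  have := hc x
  simp only [sub_apply, smul_apply, id_apply, inner_sub_left, real_inner_smul_left,
    real_inner_self_eq_norm_sq, RCLike.re_to_real]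
  linarith

variable [FiniteDimensional ℝ E]

theorem IsSymmetric.finrank_mul_le_trace {T : E →ₗ[ℝ] E} (hT : T.IsSymmetric) {c : ℝ}
    (hc : ∀ x, c * ‖x‖ ^ 2 ≤ ⟪T x, x⟫) : Module.finrank ℝ E * c ≤ T.trace ℝ E := by
  have := (hT.isPositive_sub_smul_id hc).trace_nonneg
  rw [map_sub, map_smul, trace_id, smul_eq_mul] at this
  linarith

theorem IsPositive.norm_apply_sq_le_trace_mul_inner {A : E →ₗ[ℝ] E} (hA : A.IsPositive)
    (x : E) : ‖A x‖ ^ 2 ≤ A.trace ℝ E * ⟪A x, x⟫ := by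
  set b := hA.isSymmetric.eigenvectorBasis rfl
  set μ := hA.isSymmetric.eigenvalues rfl
  have hμ (i) : 0 ≤ μ i := hA.nonneg_eigenvalues rfl i
  have hrepr (i) : b.repr (A x) i = μ i * b.repr x i :=
    hA.isSymmetric.eigenvectorBasis_apply_self_apply rfl x i
  have htrace : A.trace ℝ E = ∑ j, μ j := hA.isSymmetric.trace_eq_sum_eigenvalues rfl
  rw [← b.repr.norm_map, ← b.repr.inner_map_map, EuclideanSpace.norm_sq_eq, PiLp.inner_apply,
    htrace, Finset.mul_sum]
  refine Finset.sum_le_sum fun i _ ↦ ?_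
  have hle : μ i ≤ ∑ j, μ j := Finset.single_le_sum (fun j _ ↦ hμ j) (Finset.mem_univ i)
  simp only [hrepr, Real.norm_eq_abs, sq_abs, RCLike.inner_apply, conj_trivial]
  nlinarith [mul_nonneg (mul_nonneg (hμ i) (sub_nonneg.2 hle)) (sq_nonneg (b.repr x i))]

theorem IsSymmetric.mul_trace_sub_le_inner_trace_smul_sub_comp_self {T : E →ₗ[ℝ] E}
    (hT : T.IsSymmetric) (hE : 2 ≤ Module.finrank ℝ E) {σ : ℝ} (hσ : 0 ≤ σ)
    (hTσ : ∀ x, σ * ‖x‖ ^ 2 ≤ ⟪T x, x⟫) (x : E) :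
    σ * (T.trace ℝ E - σ) * ‖x‖ ^ 2 ≤ ⟪(((T.trace ℝ E) • LinearMap.id - T) ∘ₗ T) x, x⟫ := by
  have hA := hT.isPositive_sub_smul_id hTσ
  have hAx := hA.norm_apply_sq_le_trace_mul_inner x
  have hAx_nonneg := hA.inner_nonneg_left x
  have hm : (2 : ℝ) ≤ Module.finrank ℝ E := by exact_mod_cast hE
  rw [map_sub, map_smul, trace_id, smul_eq_mul] at hAx
  simp only [comp_apply, sub_apply, smul_apply, id_apply, inner_sub_left, real_inner_smul_left,
    real_inner_self_eq_norm_sq, norm_sub_sq_real, norm_smul, inner_smul_right, mul_pow,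
    Real.norm_eq_abs, sq_abs] at hAx hAx_nonneg ⊢
  rw [hT (T x) x, real_inner_self_eq_norm_sq]
  nlinarith [mul_nonneg (mul_nonneg (sub_nonneg.2 hm) hσ) hAx_nonneg]

end LinearMap

theorem boundary_curvature_dimension_trace_general
    {n : ℕ} {E : Type*} [NormedAddCommGroup E] [InnerProductSpace ℝ E]
    [FiniteDimensional ℝ E] (hdim : Module.finrank ℝ E + 1 = n) (hn : 3 ≤ n)
    (N ρ κ σ ξ Vν : ℝ)
    (RicM_g HessVM Rν II RicB_g HessVB : E →ₗ[ℝ] E) (dV : E →ₗ[ℝ] ℝ)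
    (hIIsymm : LinearMap.IsSymmetric II)
    (hGauss : RicB_g = RicM_g - Rν +
      ((LinearMap.trace ℝ E II) • LinearMap.id - II) ∘ₗ II)
    (hHess : HessVB = HessVM - Vν • II)
    (hCD : ∀ x : E, ρ * ‖x‖ ^ 2 ≤ ⟪(RicM_g + HessVM) x, x⟫ - dV x ^ 2 / (N - n))
    (hRν : ∀ x : E, ⟪Rν x, x⟫ ≤ κ * ‖x‖ ^ 2)
    (hσ : 0 ≤ σ) (hIIlb : ∀ x : E, σ * ‖x‖ ^ 2 ≤ ⟪II x, x⟫)
    (hVν : Vν ≤ 0) (hξ : ξ ≤ LinearMap.trace ℝ E II) :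
    (∀ x : E, (ρ - κ + σ * (ξ - σ)) * ‖x‖ ^ 2 ≤
        ⟪(RicB_g + HessVB) x, x⟫ - dV x ^ 2 / ((N - 1) - ((n : ℝ) - 1))) ∧
      (∀ x : E, (ρ - κ + ((n : ℝ) - 2) * σ ^ 2) * ‖x‖ ^ 2 ≤
        ⟪(RicB_g + HessVB) x, x⟫ - dV x ^ 2 / ((N - 1) - ((n : ℝ) - 1))) := by
  set H := LinearMap.trace ℝ E II
  have hfinrank : (Module.finrank ℝ E : ℝ) = n - 1 := by
    rw [← hdim]; push_cast; ring
  have hH : ((n : ℝ) - 1) * σ ≤ H := hfinrank ▸ hIIsymm.finrank_mul_le_trace hIIlb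
  have hboundary (x : E) : (ρ - κ + σ * (H - σ)) * ‖x‖ ^ 2 ≤
      ⟪(RicB_g + HessVB) x, x⟫ - dV x ^ 2 / ((N - 1) - ((n : ℝ) - 1)) := by
    have hgauss : σ * (H - σ) * ‖x‖ ^ 2 ≤ ⟪((H • LinearMap.id - II) ∘ₗ II) x, x⟫ :=
      hIIsymm.mul_trace_sub_le_inner_trace_smul_sub_comp_self (by omega) hσ hIIlb x
    have hcd := hCD x
    have hII_nonneg : 0 ≤ ⟪II x, x⟫ := (mul_nonneg hσ (sq_nonneg _)).trans (hIIlb x)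
    have hVν_term : 0 ≤ -Vν * ⟪II x, x⟫ := mul_nonneg (neg_nonneg.2 hVν) hII_nonneg
    rw [show (N - 1) - ((n : ℝ) - 1) = N - n by ring, hGauss, hHess]
    simp only [LinearMap.add_apply, LinearMap.sub_apply, LinearMap.smul_apply, inner_add_left,
      inner_sub_left, real_inner_smul_left] at hcd ⊢
    linarith [hRν x]
  refine ⟨fun x ↦ le_trans ?_ (hboundary x), fun x ↦ le_trans ?_ (hboundary x)⟩
  · gcongr
  · have : ((n : ℝ) - 2) * σ ^ 2 ≤ σ * (H - σ) := by nlinarith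
    gcongr

/-- (Proposition 5.4.)  Pointwise formulation on the tangent space
`E = T_x(∂M)` (of dimension `n − 1`, `n ≥ 3`) of a boundary point, identifying
`2`-tensors with endomorphisms of `E` via the induced metric `g₀` (so `g₀ = id`).
With `RicM_g`, `HessVM` the (restricted) Ricci tensor and Hessian of `V` on `M`,
`dV` the (restricted) differential of `V`, `Rν = R^M_g(·,ν,·,ν)|_{T∂M}`, `II` the
second fundamental form, `Hg = tr(II)` the mean curvature, `Vν = ⟨∇V, ν⟩`, and the
boundary tensors `RicB_g`, `HessVB` determined by the Gauss equation and the boundary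
Hessian identity: if `(M, g, μ)` satisfies `CD(ρ, N)` (restricted to tangential
directions), `R^M_g(·,ν,·,ν) ≤ κ·g₀`, `II ≥ σ·g₀` with `σ ≥ 0`, `⟨∇V, ν⟩ ≤ 0`, and
`H_g ≥ ξ`, then `(∂M, g₀, μ_{∂M})` satisfies `CD(ρ − κ + σ(ξ − σ), N − 1)`; in
particular (since always `H_g ≥ (n−1)σ`), it satisfies
`CD(ρ − κ + (n−2)σ², N − 1)`. -/
theorem boundary_curvature_dimension_trace
    {n : ℕ} {E : Type*} [NormedAddCommGroup E] [InnerProductSpace ℝ E]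
    [FiniteDimensional ℝ E] (hdim : Module.finrank ℝ E + 1 = n) (hn : 3 ≤ n)
    (N ρ κ σ ξ Vν : ℝ) (hNn : N ≠ (n : ℝ))
    (RicM_g HessVM Rν II RicB_g HessVB : E →ₗ[ℝ] E) (dV : E →ₗ[ℝ] ℝ)
    (hIIsymm : LinearMap.IsSymmetric II)
    (hGauss : RicB_g = RicM_g - Rν +
      ((LinearMap.trace ℝ E II) • LinearMap.id - II) ∘ₗ II)
    (hHess : HessVB = HessVM - Vν • II)
    (hCD : ∀ x : E, ρ * ‖x‖ ^ 2 ≤ ⟪(RicM_g + HessVM) x, x⟫ - dV x ^ 2 / (N - n))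
    (hRν : ∀ x : E, ⟪Rν x, x⟫ ≤ κ * ‖x‖ ^ 2)
    (hσ : 0 ≤ σ) (hIIlb : ∀ x : E, σ * ‖x‖ ^ 2 ≤ ⟪II x, x⟫)
    (hVν : Vν ≤ 0) (hξ : ξ ≤ LinearMap.trace ℝ E II) :
    (∀ x : E, (ρ - κ + σ * (ξ - σ)) * ‖x‖ ^ 2 ≤
        ⟪(RicB_g + HessVB) x, x⟫ - dV x ^ 2 / ((N - 1) - ((n : ℝ) - 1))) ∧
      (∀ x : E, (ρ - κ + ((n : ℝ) - 2) * σ ^ 2) * ‖x‖ ^ 2 ≤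
        ⟪(RicB_g + HessVB) x, x⟫ - dV x ^ 2 / ((N - 1) - ((n : ℝ) - 1))) :=
  boundary_curvature_dimension_trace_general hdim hn N ρ κ σ ξ Vν RicM_g HessVM Rν II RicB_g HessVB
    dV hIIsymm hGauss hHess hCD hRν hσ hIIlb hVν hξ
end
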